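/- arXiv:1807.06258 — 2 statements merged into one kernel-verified Lean document; each statement's English description precedes it below -/
import Mathlib

section
/- Let (U,Θ,ρ) be a probability space, N ∈ ℕ, Σ a symmetric positive definite N×N real matrix, and δ ∈ ℝ^N. Let G_n : U → ℝ^N (n ∈ ℕ) and G_0 : U → ℝ^N be measurable maps and W : U → [0,∞) a measurable function with ∫_U (1 + W(z))² dρ(z) < ∞, such that |G_n(z)| ≤ W(z) and |G_0(z)| ≤ W(z) for all n and ρ-almost every z, and G_n(z) → G_0(z) as n → ∞ for ρ-almost every z. For each n (and for 0), define Φ_n(z) = (1/2)⟨Σ^{-1}(δ − G_n(z)), δ − G_n(z)⟩, Z_n = ∫_U exp(−Φ_n(z)) dρ(z), and let μ_n be the probability measure on U with density dμ_n/dρ = exp(−Φ_n)/Z_n. Then there exists z_0 > 0 with Z_n ≥ z_0 for all n, and d_Hell(μ_n, μ_0) → 0 as n → ∞. -/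
open MeasureTheory Real Filter Matrix

/-- Euclidean norm on `ℝ^N`. -/
noncomputable def euclNorm {N : ℕ} (v : Fin N → ℝ) : ℝ := Real.sqrt (v ⬝ᵥ v)

/-- Least-squares potential `Φ(z) = ½ ⟨Σ⁻¹(δ - G z), δ - G z⟩`. -/
noncomputable def potential {U : Type*} {N : ℕ} (S : Matrix (Fin N) (Fin N) ℝ)
    (δ : Fin N → ℝ) (G : U → Fin N → ℝ) (z : U) : ℝ :=
  1 / 2 * ((S⁻¹).mulVec (δ - G z) ⬝ᵥ (δ - G z))

/-- Hellinger distance between two measures, absolutely continuous with respect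
to `ρ`, given by their densities `f, g`. -/
noncomputable def hellingerDist {U : Type*} [MeasurableSpace U] (ρ : Measure U)
    (f g : U → ℝ) : ℝ :=
  Real.sqrt (1 / 2 * ∫ z, (Real.sqrt (f z) - Real.sqrt (g z)) ^ 2 ∂ρ)

/-- Gibbs density `exp(-Φ)/Z` with `Z = ∫ exp(-Φ) dρ`. -/
noncomputable def gibbsDensity {U : Type*} [MeasurableSpace U] (ρ : Measure U)
    (Φ : U → ℝ) (z : U) : ℝ :=
  Real.exp (-Φ z) / ∫ w, Real.exp (-Φ w) ∂ρ

open Topology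

/-! Since `Σ⁻¹` is positive definite, every potential is nonnegative, so all the weights
`exp (-Φₙ)` lie in `(0, 1]` and the constant `1` dominates them. Pointwise convergence of the
forward maps passes through the continuous potential, so dominated convergence gives
`Zₙ → Z₀`; a convergent sequence of positive numbers with positive limit is bounded away from
`0`, which is the uniform lower bound. The densities are then bounded by `z₀⁻¹` and converge
a.e., and a second application of dominated convergence kills the Hellinger integral. -/

theorem exists_lt_forall_le_of_tendsto {α : Type*} [TopologicalSpace α] [LinearOrder α]
    [ClosedIicTopology α] {u : ℕ → α} {l a : α} (hu : Tendsto u atTop (𝓝 l))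
    (hua : ∀ n, a < u n) (hla : a < l) : ∃ c, a < c ∧ (∀ n, c ≤ u n) ∧ c ≤ l := by
  obtain ⟨c, hc_mem, hc_least⟩ :=
    hu.isCompact_insert_range.exists_isLeast (Set.insert_nonempty l _)
  refine ⟨c, ?_, fun n => hc_least (Or.inr ⟨n, rfl⟩), hc_least (Or.inl rfl)⟩
  rcases hc_mem with rfl | ⟨n, rfl⟩
  exacts [hla, hua n]

theorem tendsto_hellingerDist_zero {U : Type*} [MeasurableSpace U] {ρ : Measure U}
    [IsFiniteMeasure ρ] {f : ℕ → U → ℝ} {g : U → ℝ} {M : ℝ}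
    (hf_meas : ∀ n, AEStronglyMeasurable (f n) ρ) (hf_le : ∀ n, ∀ᵐ z ∂ρ, f n z ≤ M)
    (hfg : ∀ᵐ z ∂ρ, Tendsto (fun n => f n z) atTop (𝓝 (g z))) :
    Tendsto (fun n => hellingerDist ρ (f n) g) atTop (𝓝 0) := by
  have hg_meas : AEStronglyMeasurable g ρ :=
    aestronglyMeasurable_of_tendsto_ae atTop hf_meas hfg
  have hg_le : ∀ᵐ z ∂ρ, g z ≤ M := by
    filter_upwards [ae_all_iff.2 hf_le, hfg] with z hz hlim
    exact le_of_tendsto' hlim hz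
  have hint : Tendsto (fun n => ∫ z, (√(f n z) - √(g z)) ^ 2 ∂ρ) atTop (𝓝 0) := by
    rw [← integral_zero U ℝ (μ := ρ)]
    have hsqrt_meas {h : U → ℝ} (hh : AEStronglyMeasurable h ρ) :
        AEStronglyMeasurable (fun z => √(h z)) ρ :=
      continuous_sqrt.comp_aestronglyMeasurable hh
    -- `√M ^ 2` rather than `M`, which may be negative while `√` vanishes there.
    refine tendsto_integral_of_dominated_convergence (fun _ => √M ^ 2)
      (fun n => ((hsqrt_meas (hf_meas n)).sub (hsqrt_meas hg_meas)).pow 2)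
      (integrable_const _) (fun n => ?_) ?_
    · filter_upwards [hf_le n, hg_le] with z hfz hgz
      rw [Real.norm_eq_abs, abs_sq, ← sq_abs]
      exact pow_le_pow_left₀ (abs_nonneg _) (abs_sub_le_of_nonneg_of_le (sqrt_nonneg _)
        (sqrt_le_sqrt hfz) (sqrt_nonneg _) (sqrt_le_sqrt hgz)) 2
    · filter_upwards [hfg] with z hz
      simpa using (hz.sqrt.sub_const √(g z)).pow 2
  simpa only [hellingerDist, mul_zero, sqrt_zero] using (hint.const_mul (1 / 2)).sqrt

section Gibbs

variable {U : Type*} [MeasurableSpace U] {ρ : Measure U}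

theorem integrable_exp_neg_of_nonneg [IsFiniteMeasure ρ] {Φ : U → ℝ}
    (hΦ_meas : AEStronglyMeasurable Φ ρ) (hΦ_nonneg : ∀ᵐ z ∂ρ, 0 ≤ Φ z) :
    Integrable (fun z => exp (-Φ z)) ρ := by
  refine (integrable_const (1 : ℝ)).mono'
    (continuous_exp.comp_aestronglyMeasurable hΦ_meas.neg) ?_
  filter_upwards [hΦ_nonneg] with z hz
  simpa [abs_of_pos (exp_pos _)] using hz

theorem integral_exp_neg_pos [IsFiniteMeasure ρ] [NeZero ρ] {Φ : U → ℝ}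
    (hΦ_meas : AEStronglyMeasurable Φ ρ) (hΦ_nonneg : ∀ᵐ z ∂ρ, 0 ≤ Φ z) :
    0 < ∫ z, exp (-Φ z) ∂ρ :=
  integral_exp_pos (integrable_exp_neg_of_nonneg hΦ_meas hΦ_nonneg)

theorem tendsto_integral_exp_neg [IsFiniteMeasure ρ] {Φ : ℕ → U → ℝ} {Φ₀ : U → ℝ}
    (hΦ_meas : ∀ n, AEStronglyMeasurable (Φ n) ρ)
    (hΦ_nonneg : ∀ n, ∀ᵐ z ∂ρ, 0 ≤ Φ n z)
    (hΦ : ∀ᵐ z ∂ρ, Tendsto (fun n => Φ n z) atTop (𝓝 (Φ₀ z))) :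
    Tendsto (fun n => ∫ z, exp (-Φ n z) ∂ρ) atTop (𝓝 (∫ z, exp (-Φ₀ z) ∂ρ)) := by
  refine tendsto_integral_of_dominated_convergence (fun _ => 1)
    (fun n => continuous_exp.comp_aestronglyMeasurable (hΦ_meas n).neg) (integrable_const 1)
    (fun n => ?_) ?_
  · filter_upwards [hΦ_nonneg n] with z hz
    simpa [abs_of_pos (exp_pos _)] using hz
  · filter_upwards [hΦ] with z hz
    exact (continuous_exp.tendsto _).comp hz.neg

theorem gibbsDensity_le_inv {Φ : U → ℝ} {c : ℝ} (hc : 0 < c)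
    (hcZ : c ≤ ∫ w, exp (-Φ w) ∂ρ) {z : U} (hΦz : 0 ≤ Φ z) : gibbsDensity ρ Φ z ≤ c⁻¹ := by
  rw [← one_div]
  exact div_le_div₀ zero_le_one (exp_le_one_iff.2 (neg_nonpos.2 hΦz)) hc hcZ

theorem tendsto_gibbsDensity {Φ : ℕ → U → ℝ} {Φ₀ : U → ℝ}
    (hZ : Tendsto (fun n => ∫ w, exp (-Φ n w) ∂ρ) atTop (𝓝 (∫ w, exp (-Φ₀ w) ∂ρ)))
    (hZ₀ : ∫ w, exp (-Φ₀ w) ∂ρ ≠ 0) {z : U}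
    (hz : Tendsto (fun n => Φ n z) atTop (𝓝 (Φ₀ z))) :
    Tendsto (fun n => gibbsDensity ρ (Φ n) z) atTop (𝓝 (gibbsDensity ρ Φ₀ z)) :=
  ((continuous_exp.tendsto _).comp hz.neg).div hZ hZ₀

end Gibbs

section Potential

variable {U : Type*} {N : ℕ} (S : Matrix (Fin N) (Fin N) ℝ) (δ : Fin N → ℝ)

variable {S} in
theorem potential_nonneg (hS : S.PosDef) (G : U → Fin N → ℝ) (z : U) :
    0 ≤ potential S δ G z := by
  have h := hS.inv.posSemidef.dotProduct_mulVec_nonneg (δ - G z)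
  rw [star_trivial, dotProduct_comm] at h
  exact mul_nonneg (by norm_num) h

theorem continuous_potential_id :
    Continuous (potential S δ (id : (Fin N → ℝ) → Fin N → ℝ)) := by
  unfold potential
  fun_prop

theorem Measurable.potential [MeasurableSpace U] {G : U → Fin N → ℝ} (hG : Measurable G) :
    Measurable (potential S δ G) :=
  (continuous_potential_id S δ).measurable.comp hG

theorem tendsto_potential {G : ℕ → U → Fin N → ℝ} {G₀ : U → Fin N → ℝ} {z : U}
    (hz : Tendsto (fun n => G n z) atTop (𝓝 (G₀ z))) :
    Tendsto (fun n => potential S δ (G n) z) atTop (𝓝 (potential S δ G₀ z)) :=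
  ((continuous_potential_id S δ).tendsto _).comp hz

end Potential

theorem hellinger_convergence_with_envelope_general
    {U : Type*} [MeasurableSpace U] (ρ : Measure U) [IsProbabilityMeasure ρ]
    {N : ℕ} (S : Matrix (Fin N) (Fin N) ℝ) (hS : S.PosDef) (δ : Fin N → ℝ)
    (G : ℕ → U → Fin N → ℝ) (G0 : U → Fin N → ℝ)
    (hGmeas : ∀ n, Measurable (G n)) (hG0meas : Measurable G0)
    (hconv : ∀ᵐ z ∂ρ, Tendsto (fun n => G n z) atTop (nhds (G0 z))) :
    (∃ z0 > 0, (∀ n, z0 ≤ ∫ w, Real.exp (-(potential S δ (G n) w)) ∂ρ) ∧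
        z0 ≤ ∫ w, Real.exp (-(potential S δ G0 w)) ∂ρ) ∧
    Tendsto (fun n => hellingerDist ρ
        (gibbsDensity ρ (potential S δ (G n)))
        (gibbsDensity ρ (potential S δ G0))) atTop (nhds 0) := by
  have hΦ_nonneg (H : U → Fin N → ℝ) : ∀ᵐ z ∂ρ, 0 ≤ potential S δ H z :=
    ae_of_all _ (potential_nonneg δ hS H)
  have hΦ_meas (n : ℕ) := ((hGmeas n).potential S δ).aestronglyMeasurable (μ := ρ)
  have hΦ₀_meas := (hG0meas.potential S δ).aestronglyMeasurable (μ := ρ)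
  have hΦ : ∀ᵐ z ∂ρ, Tendsto (fun n => potential S δ (G n) z) atTop
      (𝓝 (potential S δ G0 z)) := by
    filter_upwards [hconv] with z hz using tendsto_potential S δ hz
  have hZ := tendsto_integral_exp_neg hΦ_meas (fun n => hΦ_nonneg (G n)) hΦ
  obtain ⟨c, hc, hcZ, hcZ₀⟩ := exists_lt_forall_le_of_tendsto hZ
    (fun n => integral_exp_neg_pos (hΦ_meas n) (hΦ_nonneg (G n)))
    (integral_exp_neg_pos hΦ₀_meas (hΦ_nonneg G0))
  refine ⟨⟨c, hc, hcZ, hcZ₀⟩,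
    tendsto_hellingerDist_zero (M := c⁻¹) (fun n => ?_) (fun n => ?_) ?_⟩
  · exact (((hGmeas n).potential S δ).neg.exp.div_const _).aestronglyMeasurable
  · exact ae_of_all _ fun z => gibbsDensity_le_inv hc (hcZ n) (potential_nonneg δ hS _ z)
  · filter_upwards [hΦ] with z hz using tendsto_gibbsDensity hZ (hc.trans_le hcZ₀).ne' hz

/-- Hellinger convergence of Gibbs posteriors for forward maps dominated by a
square-integrable envelope and converging a.e. (Gaussian-prior setting), with
a uniform positive lower bound on the normalizing constants. -/
theorem hellinger_convergence_with_envelope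
    {U : Type*} [MeasurableSpace U] (ρ : Measure U) [IsProbabilityMeasure ρ]
    {N : ℕ} (S : Matrix (Fin N) (Fin N) ℝ) (hS : S.PosDef) (δ : Fin N → ℝ)
    (G : ℕ → U → Fin N → ℝ) (G0 : U → Fin N → ℝ)
    (hGmeas : ∀ n, Measurable (G n)) (hG0meas : Measurable G0)
    (W : U → ℝ) (hWmeas : Measurable W) (hWnn : ∀ z, 0 ≤ W z)
    (hWint : Integrable (fun z => (1 + W z) ^ 2) ρ)
    (hbound : ∀ n, ∀ᵐ z ∂ρ, euclNorm (G n z) ≤ W z)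
    (hbound0 : ∀ᵐ z ∂ρ, euclNorm (G0 z) ≤ W z)
    (hconv : ∀ᵐ z ∂ρ, Tendsto (fun n => G n z) atTop (nhds (G0 z))) :
    (∃ z0 > 0, (∀ n, z0 ≤ ∫ w, Real.exp (-(potential S δ (G n) w)) ∂ρ) ∧
        z0 ≤ ∫ w, Real.exp (-(potential S δ G0 w)) ∂ρ) ∧
    Tendsto (fun n => hellingerDist ρ
        (gibbsDensity ρ (potential S δ (G n)))
        (gibbsDensity ρ (potential S δ G0))) atTop (nhds 0) :=
  hellinger_convergence_with_envelope_general ρ S hS δ G G0 hGmeas hG0meas hconv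
end

section
/- Let (U,Θ,ρ) be a probability space, N ∈ ℕ, Σ a symmetric positive definite N×N real matrix, and let G : U → ℝ^N be a measurable map with |G(z)| ≤ M for all z ∈ U, for some constant M. For δ ∈ ℝ^N define Φ(z,δ) = (1/2)⟨Σ^{-1}(δ − G(z)), δ − G(z)⟩, Z(δ) = ∫_U exp(−Φ(z,δ)) dρ(z), and let μ^δ be the probability measure with density dμ^δ/dρ = exp(−Φ(·,δ))/Z(δ). Then for every r > 0 there is a constant c(r), depending only on r, M and Σ, such that for all δ, δ' ∈ ℝ^N with |δ| ≤ r and |δ'| ≤ r, d_Hell(μ^δ, μ^{δ'}) ≤ c(r) |δ − δ'|. -/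
/-!
For `|δ| ≤ r` the potential `Φ(·, δ)` is bounded by `B = ‖S⁻¹‖ (r + M)² / 2` and is
`L`-Lipschitz in `δ`, uniformly in `z`, with `L = ‖S⁻¹‖ (r + M)` (`ℓ²` operator norm). Writing the square-root density
as `exp (-(Φ + log Z) / 2)`, the log-normalising constant satisfies `log Z ≥ -B` and moves by at
most the sup-distance of the potentials. Hence the exponents lie below `B` and differ by at most
`L |δ - δ'|`, so the square-root densities differ uniformly by at most `e^B L |δ - δ'|`, and
against a probability measure the Hellinger distance is bounded by this uniform distance.
-/

open MeasureTheory Real Filter Matrix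

open scoped Matrix.Norms.L2Operator

lemma abs_exp_sub_exp_le {a b A : ℝ} (ha : a ≤ A) (hb : b ≤ A) :
    |exp a - exp b| ≤ exp A * |a - b| := by
  wlog hba : b ≤ a generalizing a b
  · rw [abs_sub_comm, abs_sub_comm a]
    exact this hb ha (le_of_not_ge hba)
  have hfactor : exp a - exp b = exp a * (1 - exp (b - a)) := by
    rw [mul_sub, mul_one, ← exp_add]
    ring_nf
  have htangent : 1 - exp (b - a) ≤ a - b := by linarith [add_one_le_exp (b - a)]
  rw [abs_of_nonneg (sub_nonneg.2 (exp_le_exp.2 hba)), abs_of_nonneg (sub_nonneg.2 hba), hfactor]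
  calc exp a * (1 - exp (b - a)) ≤ exp a * (a - b) := by gcongr
    _ ≤ exp A * (a - b) := by gcongr

section EuclideanNorm

variable {N : ℕ}

lemma euclNorm_eq_norm_toLp (v : Fin N → ℝ) : euclNorm v = ‖WithLp.toLp 2 v‖ := by
  rw [norm_eq_sqrt_real_inner, EuclideanSpace.inner_toLp_toLp, euclNorm]
  simp

lemma euclNorm_nonneg (v : Fin N → ℝ) : 0 ≤ euclNorm v := sqrt_nonneg _

lemma euclNorm_sub_le (v w : Fin N → ℝ) : euclNorm (v - w) ≤ euclNorm v + euclNorm w := by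
  simpa only [euclNorm_eq_norm_toLp, WithLp.toLp_sub] using norm_sub_le _ _

lemma abs_dotProduct_le_euclNorm_mul (v w : Fin N → ℝ) :
    |v ⬝ᵥ w| ≤ euclNorm v * euclNorm w := by
  simpa [euclNorm_eq_norm_toLp, EuclideanSpace.inner_toLp_toLp, dotProduct_comm]
    using abs_real_inner_le_norm (WithLp.toLp 2 v) (WithLp.toLp 2 w)

lemma euclNorm_mulVec_le (A : Matrix (Fin N) (Fin N) ℝ) (v : Fin N → ℝ) :
    euclNorm (A *ᵥ v) ≤ ‖A‖ * euclNorm v := by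
  simpa [euclNorm_eq_norm_toLp] using A.l2_opNorm_mulVec (WithLp.toLp 2 v)

lemma abs_mulVec_dotProduct_le (A : Matrix (Fin N) (Fin N) ℝ) (v w : Fin N → ℝ) :
    |A *ᵥ v ⬝ᵥ w| ≤ ‖A‖ * euclNorm v * euclNorm w :=
  (abs_dotProduct_le_euclNorm_mul _ _).trans <|
    mul_le_mul_of_nonneg_right (euclNorm_mulVec_le A v) (euclNorm_nonneg w)

lemma abs_mulVec_dotProduct_self_sub_le (A : Matrix (Fin N) (Fin N) ℝ) (v w : Fin N → ℝ) :
    |A *ᵥ v ⬝ᵥ v - A *ᵥ w ⬝ᵥ w| ≤ ‖A‖ * (euclNorm v + euclNorm w) * euclNorm (v - w) := by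
  have hsplit : A *ᵥ v ⬝ᵥ v - A *ᵥ w ⬝ᵥ w = A *ᵥ (v - w) ⬝ᵥ v + A *ᵥ w ⬝ᵥ (v - w) := by
    simp only [mulVec_sub, sub_dotProduct, dotProduct_sub]
    ring
  calc |A *ᵥ v ⬝ᵥ v - A *ᵥ w ⬝ᵥ w|
      ≤ |A *ᵥ (v - w) ⬝ᵥ v| + |A *ᵥ w ⬝ᵥ (v - w)| := hsplit ▸ abs_add_le _ _
    _ ≤ ‖A‖ * euclNorm (v - w) * euclNorm v + ‖A‖ * euclNorm w * euclNorm (v - w) :=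
        add_le_add (abs_mulVec_dotProduct_le _ _ _) (abs_mulVec_dotProduct_le _ _ _)
    _ = ‖A‖ * (euclNorm v + euclNorm w) * euclNorm (v - w) := by ring

end EuclideanNorm

section Potential

variable {U : Type*} {N : ℕ} (S : Matrix (Fin N) (Fin N) ℝ) {G : U → Fin N → ℝ} {M r : ℝ}
  {δ δ' : Fin N → ℝ}

lemma measurable_potential [MeasurableSpace U] (hG : Measurable G) (δ : Fin N → ℝ) :
    Measurable (potential S δ G) := by
  have hquad : Continuous fun v : Fin N → ℝ => 1 / 2 * (S⁻¹ *ᵥ v ⬝ᵥ v) := by fun_prop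
  exact hquad.measurable.comp (measurable_const.sub hG)

lemma euclNorm_sub_le_add (hG : ∀ z, euclNorm (G z) ≤ M) (hδ : euclNorm δ ≤ r) (z : U) :
    euclNorm (δ - G z) ≤ r + M :=
  (euclNorm_sub_le _ _).trans (add_le_add hδ (hG z))

lemma abs_potential_le (hG : ∀ z, euclNorm (G z) ≤ M) (hδ : euclNorm δ ≤ r) (z : U) :
    |potential S δ G z| ≤ ‖S⁻¹‖ * (r + M) ^ 2 / 2 := by
  have hu := euclNorm_sub_le_add hG hδ z
  rw [potential, abs_mul, abs_of_pos (one_half_pos (α := ℝ))]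
  calc 1 / 2 * |S⁻¹ *ᵥ (δ - G z) ⬝ᵥ (δ - G z)|
      ≤ 1 / 2 * (‖S⁻¹‖ * euclNorm (δ - G z) * euclNorm (δ - G z)) := by
        gcongr
        exact abs_mulVec_dotProduct_le _ _ _
    _ ≤ 1 / 2 * (‖S⁻¹‖ * (r + M) * (r + M)) := by
        have hu₀ := euclNorm_nonneg (δ - G z)
        have hR : 0 ≤ r + M := hu₀.trans hu
        gcongr
    _ = ‖S⁻¹‖ * (r + M) ^ 2 / 2 := by ring

lemma abs_potential_sub_potential_le (hG : ∀ z, euclNorm (G z) ≤ M) (hδ : euclNorm δ ≤ r)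
    (hδ' : euclNorm δ' ≤ r) (z : U) :
    |potential S δ G z - potential S δ' G z| ≤ ‖S⁻¹‖ * (r + M) * euclNorm (δ - δ') := by
  have hquad := abs_mulVec_dotProduct_self_sub_le S⁻¹ (δ - G z) (δ' - G z)
  rw [sub_sub_sub_cancel_right] at hquad
  have hsum : euclNorm (δ - G z) + euclNorm (δ' - G z) ≤ 2 * (r + M) := by
    linarith [euclNorm_sub_le_add hG hδ z, euclNorm_sub_le_add hG hδ' z]
  simp only [potential, ← mul_sub, abs_mul, abs_of_pos (one_half_pos (α := ℝ))]
  calc 1 / 2 * |S⁻¹ *ᵥ (δ - G z) ⬝ᵥ (δ - G z) - S⁻¹ *ᵥ (δ' - G z) ⬝ᵥ (δ' - G z)|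
      ≤ 1 / 2 * (‖S⁻¹‖ * (2 * (r + M)) * euclNorm (δ - δ')) := by
        gcongr
        exact hquad.trans (by gcongr; exact euclNorm_nonneg _)
    _ = ‖S⁻¹‖ * (r + M) * euclNorm (δ - δ') := by ring

end Potential

section Gibbs

variable {U : Type*} [MeasurableSpace U] {ρ : Measure U} {Φ Ψ : U → ℝ} {B ε : ℝ}

noncomputable def logPartition (ρ : Measure U) (Φ : U → ℝ) : ℝ :=
  log (∫ z, exp (-Φ z) ∂ρ)

lemma integrable_exp_neg_of_le [IsFiniteMeasure ρ] (hΦ : AEMeasurable Φ ρ)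
    (hB : ∀ z, -B ≤ Φ z) : Integrable (fun z => exp (-Φ z)) ρ :=
  Integrable.of_bound hΦ.neg.exp.aestronglyMeasurable (exp B) <| Eventually.of_forall fun z => by
    rw [norm_of_nonneg (exp_pos _).le, exp_le_exp]
    linarith [hB z]

lemma neg_le_logPartition [IsProbabilityMeasure ρ] (hΦ : Integrable (fun z => exp (-Φ z)) ρ)
    (hB : ∀ z, Φ z ≤ B) : -B ≤ logPartition ρ Φ := by
  have hZ : exp (-B) ≤ ∫ z, exp (-Φ z) ∂ρ := by
    simpa using integral_mono (integrable_const (exp (-B))) hΦ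
      fun z => exp_le_exp.2 (neg_le_neg (hB z))
  simpa [logPartition] using log_le_log (exp_pos _) hZ

lemma logPartition_le_add [NeZero ρ] (hΦ : Integrable (fun z => exp (-Φ z)) ρ)
    (hΨ : Integrable (fun z => exp (-Ψ z)) ρ) (h : ∀ z, Ψ z ≤ Φ z + ε) :
    logPartition ρ Φ ≤ logPartition ρ Ψ + ε := by
  have hZ : ∫ z, exp (-Φ z) ∂ρ ≤ exp ε * ∫ z, exp (-Ψ z) ∂ρ := by
    rw [← integral_const_mul]
    refine integral_mono hΦ (hΨ.const_mul _) fun z => ?_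
    rw [← exp_add, exp_le_exp]
    linarith [h z]
  calc logPartition ρ Φ ≤ log (exp ε * ∫ z, exp (-Ψ z) ∂ρ) :=
        log_le_log (integral_exp_pos hΦ) hZ
    _ = logPartition ρ Ψ + ε := by
        rw [log_mul (exp_pos ε).ne' (integral_exp_pos hΨ).ne', log_exp, logPartition, add_comm]

lemma abs_logPartition_sub_le [NeZero ρ] (hΦ : Integrable (fun z => exp (-Φ z)) ρ)
    (hΨ : Integrable (fun z => exp (-Ψ z)) ρ) (h : ∀ z, |Φ z - Ψ z| ≤ ε) :
    |logPartition ρ Φ - logPartition ρ Ψ| ≤ ε := by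
  have hΦΨ := logPartition_le_add (ε := ε) hΦ hΨ fun z => by linarith [(abs_le.1 (h z)).1]
  have hΨΦ := logPartition_le_add (ε := ε) hΨ hΦ fun z => by linarith [(abs_le.1 (h z)).2]
  exact abs_sub_le_iff.2 ⟨by linarith, by linarith⟩

lemma sqrt_gibbsDensity (hZ : 0 < ∫ z, exp (-Φ z) ∂ρ) (z : U) :
    √(gibbsDensity ρ Φ z) = exp (-(Φ z + logPartition ρ Φ) / 2) := by
  rw [exp_half, gibbsDensity, logPartition, neg_add, exp_add, exp_neg (log _), exp_log hZ,
    div_eq_mul_inv]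

lemma abs_sqrt_gibbsDensity_sub_le [IsProbabilityMeasure ρ] (hΦm : AEMeasurable Φ ρ)
    (hΨm : AEMeasurable Ψ ρ) (hΦ : ∀ z, |Φ z| ≤ B) (hΨ : ∀ z, |Ψ z| ≤ B)
    (h : ∀ z, |Φ z - Ψ z| ≤ ε) (z : U) :
    |√(gibbsDensity ρ Φ z) - √(gibbsDensity ρ Ψ z)| ≤ exp B * ε := by
  have hΦi := integrable_exp_neg_of_le hΦm fun z => (abs_le.1 (hΦ z)).1
  have hΨi := integrable_exp_neg_of_le hΨm fun z => (abs_le.1 (hΨ z)).1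
  have hlogΦ := neg_le_logPartition hΦi fun z => (abs_le.1 (hΦ z)).2
  have hlogΨ := neg_le_logPartition hΨi fun z => (abs_le.1 (hΨ z)).2
  have hlog := abs_logPartition_sub_le hΦi hΨi h
  rw [sqrt_gibbsDensity (integral_exp_pos hΦi), sqrt_gibbsDensity (integral_exp_pos hΨi)]
  refine (abs_exp_sub_exp_le (A := B) (by linarith [(abs_le.1 (hΦ z)).1])
    (by linarith [(abs_le.1 (hΨ z)).1])).trans ?_
  gcongr
  rw [← sub_div, abs_div, abs_two, div_le_iff₀ two_pos]
  calc |-(Φ z + logPartition ρ Φ) - -(Ψ z + logPartition ρ Ψ)|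
      = |(Ψ z - Φ z) + (logPartition ρ Ψ - logPartition ρ Φ)| := by ring_nf
    _ ≤ ε + ε := by
        refine (abs_add_le _ _).trans (add_le_add ?_ ?_)
        · rw [abs_sub_comm]; exact h z
        · rw [abs_sub_comm]; exact hlog
    _ = ε * 2 := by ring

lemma hellingerDist_le_of_abs_sqrt_sub_le [IsProbabilityMeasure ρ] {f g : U → ℝ} {C : ℝ}
    (h : ∀ z, |√(f z) - √(g z)| ≤ C) : hellingerDist ρ f g ≤ C := by
  obtain ⟨z₀⟩ := nonempty_of_isProbabilityMeasure ρ
  have hC : 0 ≤ C := (abs_nonneg _).trans (h z₀)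
  have hsq : ∀ z, (√(f z) - √(g z)) ^ 2 ≤ C ^ 2 := fun z =>
    sq_le_sq' (abs_le.1 (h z)).1 (abs_le.1 (h z)).2
  have hint : ∫ z, (√(f z) - √(g z)) ^ 2 ∂ρ ≤ C ^ 2 := by
    simpa using integral_mono_of_nonneg (μ := ρ) (Eventually.of_forall fun z => sq_nonneg _)
      (integrable_const (C ^ 2)) (Eventually.of_forall hsq)
  rw [hellingerDist, sqrt_le_left hC]
  linarith [sq_nonneg C]

end Gibbs

theorem posterior_locally_lipschitz_bounded_forward_general
    {U : Type*} [MeasurableSpace U] (ρ : Measure U) [IsProbabilityMeasure ρ]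
    {N : ℕ} (S : Matrix (Fin N) (Fin N) ℝ)
    (G : U → Fin N → ℝ) (hGmeas : Measurable G)
    (M : ℝ) (hbound : ∀ z, euclNorm (G z) ≤ M) :
    ∀ r > 0, ∃ c : ℝ, ∀ δ δ' : Fin N → ℝ, euclNorm δ ≤ r → euclNorm δ' ≤ r →
      hellingerDist ρ (gibbsDensity ρ (potential S δ G))
          (gibbsDensity ρ (potential S δ' G))
        ≤ c * euclNorm (δ - δ') := by
  intro r _
  refine ⟨exp (‖S⁻¹‖ * (r + M) ^ 2 / 2) * (‖S⁻¹‖ * (r + M)), fun δ δ' hδ hδ' => ?_⟩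
  rw [mul_assoc]
  exact hellingerDist_le_of_abs_sqrt_sub_le <| abs_sqrt_gibbsDensity_sub_le (ρ := ρ)
    (measurable_potential S hGmeas δ).aemeasurable (measurable_potential S hGmeas δ').aemeasurable
    (abs_potential_le S hbound hδ) (abs_potential_le S hbound hδ')
    (abs_potential_sub_potential_le S hbound hδ hδ')

/-- Well-posedness (local Lipschitz continuity in the data `δ`, in the
Hellinger distance) of the Bayesian posterior for a uniformly bounded forward
map (uniform-prior setting). -/
theorem posterior_locally_lipschitz_bounded_forward
    {U : Type*} [MeasurableSpace U] (ρ : Measure U) [IsProbabilityMeasure ρ]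
    {N : ℕ} (S : Matrix (Fin N) (Fin N) ℝ) (hS : S.PosDef)
    (G : U → Fin N → ℝ) (hGmeas : Measurable G)
    (M : ℝ) (hbound : ∀ z, euclNorm (G z) ≤ M) :
    ∀ r > 0, ∃ c : ℝ, ∀ δ δ' : Fin N → ℝ, euclNorm δ ≤ r → euclNorm δ' ≤ r →
      hellingerDist ρ (gibbsDensity ρ (potential S δ G))
          (gibbsDensity ρ (potential S δ' G))
        ≤ c * euclNorm (δ - δ') :=
  posterior_locally_lipschitz_bounded_forward_general ρ S G hGmeas M hbound
end
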